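/- The staircase function Φ defined on the strip V + Ω by Φ(z) = z + a if Π_Y(z) ∈ Ω^a, Φ(z) = z + a + b if Π_Y(z) ∈ Ω^{a+b}, and Φ(z) = z + b if Π_Y(z) ∈ Ω^b, where Ω^a = [y₀, y₀+|Ω|-Π_Y(a)), Ω^{a+b} = [y₀+|Ω|-Π_Y(a), y₀-Π_Y(b)), Ω^b = [y₀-Π_Y(b), y₀+|Ω|), is a bijection of the strip V + Ω onto itself. -/

import Mathlib

/-- Projection to the vertical axis `Y` along the line `V = {(x, αx)}`. -/
noncomputable def projY (α : ℝ) (p : Fin 2 → ℝ) : ℝ := p 1 - α * p 0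

/-- Real lift of an integer vector. -/
def lift (z : Fin 2 → ℤ) : Fin 2 → ℝ := fun i => (z i : ℝ)

/-- The staircase function on the strip: add `a`, `a+b`, or `b` according to the
subwindow of `[y₀, y₀ + L)` to which the point projects. -/
noncomputable def staircaseFn (α y₀ L : ℝ) (a b : Fin 2 → ℤ) (p : Fin 2 → ℝ) : Fin 2 → ℝ :=
  if projY α p < y₀ + L - projY α (lift a) then p + lift a
  else if projY α p < y₀ - projY α (lift b) then p + lift a + lift b
  else p + lift b

/-!
Only the additivity of `Π_Y` matters, so we work with an arbitrary additive map `π : E →+ ℝ`.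
The inverse of the staircase map with steps `(u, v)` is the staircase map with steps `(-v, -u)`:
it undoes the three translations on the three image subwindows `[y₀, y₀ + L + π v)`,
`[y₀ + L + π v, y₀ + π u)` and `[y₀ + π u, y₀ + L)`. The hypotheses on `(u, v)` are invariant
under `(u, v) ↦ (-v, -u)`, so one maps-to lemma and one left-inverse lemma give bijectivity.
-/

open Set

section Staircase

variable {E : Type*} [AddCommGroup E] (π : E →+ ℝ) (y₀ L : ℝ)

noncomputable def staircase (u v : E) (p : E) : E :=
  if π p < y₀ + L - π u then p + u
  else if π p < y₀ - π v then p + u + v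
  else p + v

variable {π y₀ L} {u v : E}

theorem staircase_mapsTo (hu : 0 ≤ π u) (hv : π v ≤ 0) (huL : π u ≤ L) (hvL : -π v ≤ L) :
    MapsTo (staircase π y₀ L u v) (π ⁻¹' Ico y₀ (y₀ + L)) (π ⁻¹' Ico y₀ (y₀ + L)) := by
  rintro p ⟨hp₀, hp₁⟩
  unfold staircase
  split_ifs <;> simp only [mem_preimage, map_add, mem_Ico] <;> constructor <;> linarith

theorem leftInvOn_staircase_neg_swap (huv : L ≤ π u - π v) :
    LeftInvOn (staircase π y₀ L (-v) (-u)) (staircase π y₀ L u v) (π ⁻¹' Ico y₀ (y₀ + L)) := by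
  rintro p ⟨hp₀, hp₁⟩
  unfold staircase
  split_ifs <;> simp only [map_add, map_neg] at * <;> first | (exfalso; linarith) | abel

theorem staircase_bijOn (hu : 0 ≤ π u) (hv : π v ≤ 0) (huL : π u ≤ L) (hvL : -π v ≤ L)
    (huv : L ≤ π u - π v) :
    BijOn (staircase π y₀ L u v) (π ⁻¹' Ico y₀ (y₀ + L)) (π ⁻¹' Ico y₀ (y₀ + L)) := by
  have hswap : L ≤ π (-v) - π (-u) := by simpa only [map_neg, neg_sub_neg] using huv
  refine InvOn.bijOn ⟨leftInvOn_staircase_neg_swap huv, ?_⟩ (staircase_mapsTo hu hv huL hvL)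
    (staircase_mapsTo (by simpa using hv) (by simpa using hu) (by simpa using hvL)
      (by simpa using huL))
  simpa only [neg_neg] using leftInvOn_staircase_neg_swap (y₀ := y₀) hswap

end Staircase

noncomputable def projYHom (α : ℝ) : (Fin 2 → ℝ) →+ ℝ :=
  AddMonoidHom.mk' (projY α) fun p q => by simp only [projY, Pi.add_apply]; ring

theorem staircase_function_bijective_general
    (α y₀ L : ℝ) (a b : Fin 2 → ℤ)
    (haY : 0 < projY α (lift a)) (hbY : projY α (lift b) < 0)
    (haL : projY α (lift a) ≤ L) (hbL : -projY α (lift b) ≤ L)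
    (hab : L ≤ projY α (lift a) - projY α (lift b)) :
    Set.BijOn (staircaseFn α y₀ L a b)
      {p : Fin 2 → ℝ | projY α p ∈ Set.Ico y₀ (y₀ + L)}
      {p : Fin 2 → ℝ | projY α p ∈ Set.Ico y₀ (y₀ + L)} :=
  staircase_bijOn (π := projYHom α) haY.le hbY.le haL hbL hab

/-- The staircase function `Φ` is a bijection of the strip `V + Ω` onto itself. -/
theorem staircase_function_bijective
    (α y₀ L : ℝ) (hα : Irrational α) (hL : 0 < L) (a b : Fin 2 → ℤ)
    (haY : 0 < projY α (lift a)) (hbY : projY α (lift b) < 0)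
    (haL : projY α (lift a) ≤ L) (hbL : -projY α (lift b) ≤ L)
    (hab : L ≤ projY α (lift a) - projY α (lift b)) :
    Set.BijOn (staircaseFn α y₀ L a b)
      {p : Fin 2 → ℝ | projY α p ∈ Set.Ico y₀ (y₀ + L)}
      {p : Fin 2 → ℝ | projY α p ∈ Set.Ico y₀ (y₀ + L)} :=
  staircase_function_bijective_general α y₀ L a b haY hbY haL hbL hab
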